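/- arXiv:0811.1350 — 2 statements merged into one kernel-verified Lean document; each statement's English description precedes it below -/
import Mathlib

section
/- Let X, Y be Banach spaces and let γ̃ : ℝ^N → (0,∞) satisfy γ̃(t) ≤ C₁ γ̃(t-s) γ̃(s) for all t, s. Suppose k : ℝ^N → B(X,Y) is measurable and there is C₃ such that ∫ ‖k(t)^* y^*‖_{X^*} γ̃(t) dt ≤ C₃ ‖y^*‖_{Y^*} for all y^* ∈ Y^*. Then the convolution operator K f(t) = ∫ k(t-s) f(s) ds is bounded from L^{∞,γ̃}(ℝ^N, X) to L^{∞,γ̃}(ℝ^N, Y) with norm at most C₁ C₃. -/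
open MeasureTheory ENNReal

/-- under the submultiplicativity condition `γ̃(t) ≤ C₁ γ̃(t-s) γ̃(s)` and the
dual kernel bound `∫ ‖k(t)^* y^*‖ γ̃(t) dt ≤ C₃ ‖y^*‖`, the convolution operator
`K f(t) = ∫ k(t-s) f(s) ds` is bounded on weighted `L^∞` with norm at most `C₁ C₃`,
where `‖g‖_{L^{∞,γ̃}} = ess sup ‖g(t)‖ γ̃(t)`. -/
theorem convolution_bounded_weighted_Linfty
    (N : ℕ) (X Y : Type*) [NormedAddCommGroup X] [NormedSpace ℝ X] [CompleteSpace X]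
    [NormedAddCommGroup Y] [NormedSpace ℝ Y] [CompleteSpace Y]
    (γt : EuclideanSpace ℝ (Fin N) → ℝ) (hγtpos : ∀ t, 0 < γt t) (hγtm : Measurable γt)
    (C₁ C₃ : ℝ) (hC₁ : 0 ≤ C₁) (hC₃ : 0 ≤ C₃)
    (hsub : ∀ t s : EuclideanSpace ℝ (Fin N), γt t ≤ C₁ * γt (t - s) * γt s)
    (k : EuclideanSpace ℝ (Fin N) → X →L[ℝ] Y)
    (hkm : AEStronglyMeasurable k volume)
    (hk : ∀ y' : Y →L[ℝ] ℝ, ∫⁻ t, (‖y'.comp (k t)‖₊ : ℝ≥0∞) * ENNReal.ofReal (γt t) ≤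
      ENNReal.ofReal C₃ * (‖y'‖₊ : ℝ≥0∞)) :
    ∀ f : EuclideanSpace ℝ (Fin N) → X, AEStronglyMeasurable f volume →
      essSup (fun s => (‖f s‖₊ : ℝ≥0∞) * ENNReal.ofReal (γt s)) volume < ∞ →
      essSup (fun t => (‖∫ s, k (t - s) (f s)‖₊ : ℝ≥0∞) * ENNReal.ofReal (γt t)) volume ≤
        ENNReal.ofReal C₁ * ENNReal.ofReal C₃ *
          essSup (fun s => (‖f s‖₊ : ℝ≥0∞) * ENNReal.ofReal (γt s)) volume := by
  intro f hf hM
  set M := essSup (fun s => (‖f s‖₊ : ℝ≥0∞) * ENNReal.ofReal (γt s)) volume with hMdef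
  have hMne : M ≠ ∞ := hM.ne
  refine essSup_le_of_ae_le _ (Filter.Eventually.of_forall fun t => ?_)
  by_cases hint : Integrable (fun s => k (t - s) (f s)) volume
  swap
  · simp [integral_undef hint]
  obtain ⟨y', hy'norm, hy'⟩ := exists_dual_vector'' ℝ (∫ s, k (t - s) (f s))
  have hMae : ∀ᵐ s : EuclideanSpace ℝ (Fin N) ∂volume,
      (‖f s‖₊ : ℝ≥0∞) * ENNReal.ofReal (γt s) ≤ M := ENNReal.ae_le_essSup _
  have h1 : (‖∫ s, k (t - s) (f s)‖₊ : ℝ≥0∞) ≤ ∫⁻ s, (‖y' (k (t - s) (f s))‖₊ : ℝ≥0∞) := by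
    have hcomm : ∫ s, y' (k (t - s) (f s)) = y' (∫ s, k (t - s) (f s)) :=
      y'.integral_comp_comm hint
    calc (‖∫ s, k (t - s) (f s)‖₊ : ℝ≥0∞)
        = (‖∫ s, y' (k (t - s) (f s))‖₊ : ℝ≥0∞) := by
          rw [hcomm, hy']; simp
      _ ≤ ∫⁻ s, (‖y' (k (t - s) (f s))‖₊ : ℝ≥0∞) :=
          enorm_integral_le_lintegral_enorm _
  have key : ∀ᵐ s : EuclideanSpace ℝ (Fin N) ∂volume,
      (‖y' (k (t - s) (f s))‖₊ : ℝ≥0∞) * ENNReal.ofReal (γt t) ≤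
        (ENNReal.ofReal C₁ * M) *
          ((‖y'.comp (k (t - s))‖₊ : ℝ≥0∞) * ENNReal.ofReal (γt (t - s))) := by
    filter_upwards [hMae] with s hs
    have hb : (‖y' (k (t - s) (f s))‖₊ : ℝ≥0∞) ≤
        (‖y'.comp (k (t - s))‖₊ : ℝ≥0∞) * (‖f s‖₊ : ℝ≥0∞) := by
      exact_mod_cast (y'.comp (k (t - s))).le_opNNNorm (f s)
    have hγ : ENNReal.ofReal (γt t) ≤
        ENNReal.ofReal C₁ * ENNReal.ofReal (γt (t - s)) * ENNReal.ofReal (γt s) := by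
      rw [← ENNReal.ofReal_mul hC₁, ← ENNReal.ofReal_mul (mul_nonneg hC₁ (hγtpos _).le)]
      exact ENNReal.ofReal_le_ofReal (hsub t s)
    calc (‖y' (k (t - s) (f s))‖₊ : ℝ≥0∞) * ENNReal.ofReal (γt t)
        ≤ ((‖y'.comp (k (t - s))‖₊ : ℝ≥0∞) * (‖f s‖₊ : ℝ≥0∞)) *
          (ENNReal.ofReal C₁ * ENNReal.ofReal (γt (t - s)) * ENNReal.ofReal (γt s)) :=
          mul_le_mul' hb hγ
      _ = (ENNReal.ofReal C₁ *
            ((‖y'.comp (k (t - s))‖₊ : ℝ≥0∞) * ENNReal.ofReal (γt (t - s)))) *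
            ((‖f s‖₊ : ℝ≥0∞) * ENNReal.ofReal (γt s)) := by ring
      _ ≤ (ENNReal.ofReal C₁ *
            ((‖y'.comp (k (t - s))‖₊ : ℝ≥0∞) * ENNReal.ofReal (γt (t - s)))) * M :=
          mul_le_mul_right hs _
      _ = (ENNReal.ofReal C₁ * M) *
            ((‖y'.comp (k (t - s))‖₊ : ℝ≥0∞) * ENNReal.ofReal (γt (t - s))) := by ring
  have hCoV : ∫⁻ s, (‖y'.comp (k (t - s))‖₊ : ℝ≥0∞) * ENNReal.ofReal (γt (t - s))
      = ∫⁻ u, (‖y'.comp (k u)‖₊ : ℝ≥0∞) * ENNReal.ofReal (γt u) :=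
    (Measure.measurePreserving_sub_left volume t).lintegral_comp_emb
      (MeasurableEquiv.subLeft t).measurableEmbedding (fun u => (‖y'.comp (k u)‖₊ : ℝ≥0∞) * ENNReal.ofReal (γt u))
  calc (‖∫ s, k (t - s) (f s)‖₊ : ℝ≥0∞) * ENNReal.ofReal (γt t)
      ≤ (∫⁻ s, (‖y' (k (t - s) (f s))‖₊ : ℝ≥0∞)) * ENNReal.ofReal (γt t) :=
        mul_le_mul_left h1 _
    _ = ∫⁻ s, (‖y' (k (t - s) (f s))‖₊ : ℝ≥0∞) * ENNReal.ofReal (γt t) :=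
        (lintegral_mul_const' _ _ ofReal_ne_top).symm
    _ ≤ ∫⁻ s, (ENNReal.ofReal C₁ * M) *
          ((‖y'.comp (k (t - s))‖₊ : ℝ≥0∞) * ENNReal.ofReal (γt (t - s))) :=
        lintegral_mono_ae key
    _ = (ENNReal.ofReal C₁ * M) *
          ∫⁻ s, (‖y'.comp (k (t - s))‖₊ : ℝ≥0∞) * ENNReal.ofReal (γt (t - s)) :=
        lintegral_const_mul' _ _ (by finiteness)
    _ = (ENNReal.ofReal C₁ * M) *
          ∫⁻ u, (‖y'.comp (k u)‖₊ : ℝ≥0∞) * ENNReal.ofReal (γt u) := by rw [hCoV]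
    _ ≤ (ENNReal.ofReal C₁ * M) * (ENNReal.ofReal C₃ * (‖y'‖₊ : ℝ≥0∞)) :=
        mul_le_mul_right (hk y') _
    _ ≤ (ENNReal.ofReal C₁ * M) * (ENNReal.ofReal C₃ * 1) := by
        gcongr
        exact_mod_cast hy'norm
    _ = ENNReal.ofReal C₁ * ENNReal.ofReal C₃ * M := by ring
end

section
/- Let E be a Banach space and A a φ-positive operator in E (densely defined with ‖(A + λ)^{-1}‖ ≤ M(1+|λ|)^{-1} for λ in the sector S_φ, 0 ≤ φ < π). For ξ ∈ ℝ and λ ∈ S_φ with ξ² + λ ∈ S_φ, define σ(ξ) = ξ²(A + ξ² + λ)^{-1}. Then σ ∈ C²(ℝ, B(E)) and there is a constant C, uniform in λ, such that ‖(1+|ξ|)^k (d/dξ)^k σ(ξ)‖_{B(E)} ≤ C for k = 0, 1, 2 and all ξ ∈ ℝ. -/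
/-!
Put `f ξ = R (ξ² + λ)`. A nonzero `w` in the sector makes an angle at most `φ` with the positive
real axis, so `‖t + w‖ ≥ cos (φ/2) (t + ‖w‖)` for `t ≥ 0`; hence
`(1 + |ξ|)² ‖f ξ‖ ≤ 2M / cos (φ/2)`.
The resolvent identity `f y - f x = (x² - y²) f y f x` shows that `f` is differentiable with
`f' = -2ξ f²`. Therefore `σ' = 2ξ f - 2ξ³ f²` and `σ'' = 2f - 10ξ² f² + 8ξ⁴ f³`: the `k`-th
derivative is a combination of terms `ξ ^ j f ^ n` with `k + j ≤ 2n`, and each of these, weighted by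
`(1 + |ξ|) ^ k`, is at most `((1 + |ξ|)² ‖f ξ‖) ^ n`.
-/

noncomputable section

/-- The sector `S_φ = {λ ∈ ℂ : |arg λ| ≤ φ} ∪ {0}`. -/
def Sector (φ : ℝ) : Set ℂ := {z | z = 0 ∨ |Complex.arg z| ≤ φ}

open Filter Topology

theorem norm_mul_cos_le_re_of_mem_sector {φ : ℝ} (hφ : φ ≤ Real.pi) {w : ℂ}
    (hw : w ∈ Sector φ) : ‖w‖ * Real.cos φ ≤ w.re := by
  rcases eq_or_ne w 0 with rfl | hw0
  · simp
  have hcos : Real.cos φ ≤ Real.cos w.arg := by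
    rw [← Real.cos_abs w.arg]
    exact Real.cos_le_cos_of_nonneg_of_le_pi (abs_nonneg _) hφ (hw.resolve_left hw0)
  calc ‖w‖ * Real.cos φ ≤ ‖w‖ * Real.cos w.arg := by gcongr
    _ = w.re := by rw [Complex.cos_arg hw0]; field_simp

theorem cos_half_mul_le_norm_ofReal_add {φ : ℝ} (hφ : φ ≤ Real.pi) {w : ℂ}
    (hw : w ∈ Sector φ) {t : ℝ} (ht : 0 ≤ t) :
    Real.cos (φ / 2) * (t + ‖w‖) ≤ ‖(t : ℂ) + w‖ := by
  have hre := norm_mul_cos_le_re_of_mem_sector hφ hw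
  have hnorm_sq : ‖(t : ℂ) + w‖ ^ 2 = t ^ 2 + 2 * t * w.re + ‖w‖ ^ 2 := by
    simp only [Complex.sq_norm, Complex.normSq_apply, Complex.add_re, Complex.add_im,
      Complex.ofReal_re, Complex.ofReal_im]
    ring
  have hcos_sq : Real.cos (φ / 2) ^ 2 = (1 + Real.cos φ) / 2 := by
    rw [Real.cos_sq]; ring_nf
  refine le_of_sq_le_sq ?_ (norm_nonneg _)
  rw [mul_pow, hcos_sq, hnorm_sq]
  -- the difference of the two sides is `(1 - cos φ) / 2 * (t - ‖w‖) ^ 2`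
  nlinarith [mul_nonneg (sub_nonneg.2 (Real.cos_le_one φ)) (sq_nonneg (t - ‖w‖)),
    mul_le_mul_of_nonneg_left hre ht]

theorem cos_half_pos {φ : ℝ} (hφ0 : 0 ≤ φ) (hφπ : φ < Real.pi) : 0 < Real.cos (φ / 2) :=
  Real.cos_pos_of_mem_Ioo ⟨by linarith [Real.pi_pos], by linarith⟩

theorem one_add_abs_pow_mul_abs_pow_mul_pow_le {ξ r : ℝ} {k j n : ℕ} (hkj : k + j ≤ 2 * n)
    (hr : 0 ≤ r) : (1 + |ξ|) ^ k * (|ξ| ^ j * r ^ n) ≤ ((1 + |ξ|) ^ 2 * r) ^ n := by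
  have hw : 1 ≤ 1 + |ξ| := le_add_of_nonneg_right (abs_nonneg ξ)
  calc (1 + |ξ|) ^ k * (|ξ| ^ j * r ^ n) ≤ (1 + |ξ|) ^ k * ((1 + |ξ|) ^ j * r ^ n) := by
        gcongr; linarith
    _ = (1 + |ξ|) ^ (k + j) * r ^ n := by ring
    _ ≤ (1 + |ξ|) ^ (2 * n) * r ^ n := by gcongr
    _ = ((1 + |ξ|) ^ 2 * r) ^ n := by rw [mul_pow, ← pow_mul]

section RealNormedAlgebra

variable {𝔸 : Type*} [NormedRing 𝔸] [NormedAlgebra ℝ 𝔸] {f : ℝ → 𝔸}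

theorem continuousAt_of_resolvent_identity {g : ℝ → ℝ} {x B : ℝ} (hg : ContinuousAt g x)
    (hB : ∀ y, ‖f y‖ ≤ B) (hf : ∀ y, f y - f x = (g x - g y) • (f y * f x)) :
    ContinuousAt f x := by
  rw [ContinuousAt, tendsto_iff_norm_sub_tendsto_zero]
  have hbound : ∀ y, ‖f y - f x‖ ≤ |g x - g y| * (B * ‖f x‖) := fun y => by
    rw [hf y, norm_smul, Real.norm_eq_abs]
    gcongr
    exact (norm_mul_le _ _).trans (by gcongr; exact hB y)
  refine squeeze_zero (fun _ => norm_nonneg _) hbound ?_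
  have h : Tendsto (fun y => |g x - g y| * (B * ‖f x‖)) (𝓝 x)
      (𝓝 (|g x - g x| * (B * ‖f x‖))) :=
    ((continuousAt_const.sub hg).abs.mul continuousAt_const).tendsto
  simpa using h

theorem hasDerivAt_of_resolvent_identity {g : ℝ → ℝ} {g' x B : ℝ} (hg : HasDerivAt g g' x)
    (hB : ∀ y, ‖f y‖ ≤ B) (hf : ∀ y, f y - f x = (g x - g y) • (f y * f x)) :
    HasDerivAt f (-g' • (f x * f x)) x := by
  have hcont := continuousAt_of_resolvent_identity hg.continuousAt hB hf
  rw [hasDerivAt_iff_tendsto_slope]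
  have hslope : (fun y => -slope g x y • (f y * f x)) =ᶠ[𝓝[≠] x] slope f x := by
    filter_upwards with y
    rw [slope_def_module, slope_def_module, hf y, smul_smul, smul_eq_mul]
    congr 1
    ring
  refine Tendsto.congr' hslope ?_
  exact hg.tendsto_slope.neg.smul
    ((hcont.mul continuousAt_const).tendsto.mono_left nhdsWithin_le_nhds)

theorem one_add_abs_pow_mul_norm_smul_pow_le {a : 𝔸} {ξ s c L : ℝ} {k j n : ℕ} (hn : 0 < n)
    (hkj : k + j ≤ 2 * n) (hc : 0 ≤ c) (hs : |s| ≤ c * |ξ| ^ j)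
    (ha : (1 + |ξ|) ^ 2 * ‖a‖ ≤ L) : (1 + |ξ|) ^ k * ‖s • a ^ n‖ ≤ c * L ^ n := by
  calc (1 + |ξ|) ^ k * ‖s • a ^ n‖ ≤ (1 + |ξ|) ^ k * (c * |ξ| ^ j * ‖a‖ ^ n) := by
        rw [norm_smul, Real.norm_eq_abs]
        gcongr
        exact norm_pow_le' a hn
    _ = c * ((1 + |ξ|) ^ k * (|ξ| ^ j * ‖a‖ ^ n)) := by ring
    _ ≤ c * L ^ n := by
        gcongr
        exact (one_add_abs_pow_mul_abs_pow_mul_pow_le hkj (norm_nonneg a)).trans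
          (pow_le_pow_left₀ (by positivity) ha n)

theorem hasDerivAt_pow_of_hasDerivAt_smul_sq {a x : ℝ} (hf : HasDerivAt f (a • f x ^ 2) x)
    (n : ℕ) :
    HasDerivAt (fun y => f y ^ n) ((n * a) • f x ^ (n + 1)) x := by
  induction n with
  | zero => simpa using hasDerivAt_const x (1 : 𝔸)
  | succ n ih =>
    rw [show (fun y => f y ^ (n + 1)) = fun y => f y ^ n * f y from funext fun y => pow_succ _ _]
    refine (ih.mul hf).congr_deriv ?_
    simp only [smul_mul_assoc, mul_smul_comm, ← pow_succ, ← pow_add]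
    push_cast
    module

theorem hasDerivAt_sq_smul (hf : ∀ x, HasDerivAt f (-(2 * x) • f x ^ 2) x) (x : ℝ) :
    HasDerivAt (fun ξ => ξ ^ 2 • f ξ) ((2 * x) • f x - (2 * x ^ 3) • f x ^ 2) x := by
  refine ((hasDerivAt_pow 2 x).smul (hf x)).congr_deriv ?_
  simp only [smul_smul, Nat.cast_ofNat, pow_one, Nat.add_one_sub_one]
  module

theorem hasDerivAt_deriv_sq_smul (hf : ∀ x, HasDerivAt f (-(2 * x) • f x ^ 2) x) (x : ℝ) :
    HasDerivAt (fun ξ => (2 * ξ) • f ξ - (2 * ξ ^ 3) • f ξ ^ 2)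
      ((2 : ℝ) • f x - (10 * x ^ 2) • f x ^ 2 + (8 * x ^ 4) • f x ^ 3) x := by
  have h₁ : HasDerivAt (fun ξ : ℝ => 2 * ξ) 2 x := by simpa using (hasDerivAt_id x).const_mul 2
  have h₃ : HasDerivAt (fun ξ : ℝ => 2 * ξ ^ 3) (6 * x ^ 2) x := by
    refine ((hasDerivAt_pow 3 x).const_mul 2).congr_deriv ?_
    push_cast; ring
  have h₂ := hasDerivAt_pow_of_hasDerivAt_smul_sq (hf x) 2
  refine ((h₁.smul (hf x)).sub (h₃.smul h₂)).congr_deriv ?_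
  simp only [smul_smul]
  push_cast
  module

theorem contDiff_two_sq_smul (hf : ∀ x, HasDerivAt f (-(2 * x) • f x ^ 2) x) :
    ContDiff ℝ 2 (fun ξ => ξ ^ 2 • f ξ) := by
  have hfc : Continuous f := continuous_iff_continuousAt.2 fun x => (hf x).continuousAt
  rw [show (2 : WithTop ℕ∞) = 1 + 1 from rfl, contDiff_succ_iff_deriv]
  refine ⟨fun x => (hasDerivAt_sq_smul hf x).differentiableAt, by simp, ?_⟩
  rw [funext fun x => (hasDerivAt_sq_smul hf x).deriv, show (1 : WithTop ℕ∞) = 0 + 1 from rfl,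
    contDiff_succ_iff_deriv]
  refine ⟨fun x => (hasDerivAt_deriv_sq_smul hf x).differentiableAt, by simp, ?_⟩
  rw [funext fun x => (hasDerivAt_deriv_sq_smul hf x).deriv, contDiff_zero]
  fun_prop

theorem one_add_abs_pow_mul_norm_iteratedDeriv_sq_smul_le
    (hf : ∀ x, HasDerivAt f (-(2 * x) • f x ^ 2) x) {L : ℝ}
    (hL : ∀ ξ, (1 + |ξ|) ^ 2 * ‖f ξ‖ ≤ L) {k : ℕ} (hk : k ≤ 2) (ξ : ℝ) :
    (1 + |ξ|) ^ k * ‖iteratedDeriv k (fun ξ => ξ ^ 2 • f ξ) ξ‖ ≤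
      2 * L + 10 * L ^ 2 + 8 * L ^ 3 := by
  have hL0 : 0 ≤ L := (by positivity : 0 ≤ (1 + |ξ|) ^ 2 * ‖f ξ‖).trans (hL ξ)
  have hd₁ := funext fun x => (hasDerivAt_sq_smul hf x).deriv
  have hd₂ := funext fun x => (hasDerivAt_deriv_sq_smul hf x).deriv
  interval_cases k
  · have h := one_add_abs_pow_mul_norm_smul_pow_le (k := 0) (j := 2) (s := ξ ^ 2) (c := 1)
      zero_lt_one (by norm_num) zero_le_one (by simp) (hL ξ)
    simp only [pow_one, one_mul] at h
    rw [iteratedDeriv_zero]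
    nlinarith
  · rw [iteratedDeriv_one, hd₁]
    have h₁ := one_add_abs_pow_mul_norm_smul_pow_le (k := 1) (j := 1) (s := 2 * ξ) (c := 2)
      zero_lt_one (by norm_num) zero_le_two (by simp [abs_mul]) (hL ξ)
    have h₂ := one_add_abs_pow_mul_norm_smul_pow_le (k := 1) (j := 3) (s := 2 * ξ ^ 3) (c := 2)
      zero_lt_two (by norm_num) zero_le_two (by simp [abs_mul]) (hL ξ)
    simp only [pow_one] at h₁
    calc _ ≤ (1 + |ξ|) ^ 1 * (‖(2 * ξ) • f ξ‖ + ‖(2 * ξ ^ 3) • f ξ ^ 2‖) := by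
          gcongr; exact norm_sub_le _ _
      _ ≤ 2 * L + 2 * L ^ 2 := by linarith
      _ ≤ _ := by nlinarith
  · rw [iteratedDeriv_succ, iteratedDeriv_one, hd₁, hd₂]
    have h₁ := one_add_abs_pow_mul_norm_smul_pow_le (k := 2) (j := 0) (s := 2) (c := 2)
      zero_lt_one (by norm_num) zero_le_two (by simp) (hL ξ)
    have h₂ := one_add_abs_pow_mul_norm_smul_pow_le (k := 2) (j := 2) (s := 10 * ξ ^ 2) (c := 10)
      zero_lt_two (by norm_num) (by norm_num) (by simp [abs_mul]) (hL ξ)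
    have h₃ := one_add_abs_pow_mul_norm_smul_pow_le (k := 2) (j := 4) (s := 8 * ξ ^ 4) (c := 8)
      zero_lt_three (by norm_num) (by norm_num) (by simp [abs_mul]) (hL ξ)
    simp only [pow_one] at h₁
    calc _ ≤ (1 + |ξ|) ^ 2 * (‖(2 : ℝ) • f ξ‖ + ‖(10 * ξ ^ 2) • f ξ ^ 2‖
          + ‖(8 * ξ ^ 4) • f ξ ^ 3‖) := by
          gcongr; exact (norm_add_le _ _).trans (by gcongr; exact norm_sub_le _ _)
      _ ≤ _ := by linarith

end RealNormedAlgebra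

section Resolvent

variable {E : Type*} [NormedAddCommGroup E] [NormedSpace ℂ E] {φ M : ℝ} {R : ℂ → E →L[ℂ] E}

theorem nonneg_of_norm_resolvent_le (hR : ∀ z ∈ Sector φ, ‖R z‖ ≤ M * (1 + ‖z‖)⁻¹) :
    0 ≤ M := by
  simpa using (norm_nonneg _).trans (hR 0 (Or.inl rfl))

theorem one_add_abs_sq_mul_norm_resolvent_le (hφ0 : 0 ≤ φ) (hφπ : φ < Real.pi)
    (hR : ∀ z ∈ Sector φ, ‖R z‖ ≤ M * (1 + ‖z‖)⁻¹) {lam : ℂ} (hlam : lam ∈ Sector φ) {ξ : ℝ}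
    (hξ : (ξ : ℂ) ^ 2 + lam ∈ Sector φ) :
    (1 + |ξ|) ^ 2 * ‖R ((ξ : ℂ) ^ 2 + lam)‖ ≤ 2 * M / Real.cos (φ / 2) := by
  set c := Real.cos (φ / 2)
  set N := ‖(ξ : ℂ) ^ 2 + lam‖
  have hc : 0 < c := cos_half_pos hφ0 hφπ
  have hN : c * (1 + ξ ^ 2) ≤ 1 + N := by
    have h := cos_half_mul_le_norm_ofReal_add hφπ.le hlam (sq_nonneg ξ)
    push_cast at h
    nlinarith [Real.cos_le_one (φ / 2), norm_nonneg lam]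
  have hRN : ‖R ((ξ : ℂ) ^ 2 + lam)‖ * (1 + N) ≤ M := by
    have := hR _ hξ
    rwa [← div_eq_mul_inv, le_div_iff₀ (by positivity)] at this
  rw [le_div_iff₀ hc]
  calc (1 + |ξ|) ^ 2 * ‖R ((ξ : ℂ) ^ 2 + lam)‖ * c
      ≤ 2 * (c * (1 + ξ ^ 2)) * ‖R ((ξ : ℂ) ^ 2 + lam)‖ := by
        have : (1 + |ξ|) ^ 2 ≤ 2 * (1 + ξ ^ 2) := by
          nlinarith [sq_nonneg (1 - |ξ|), sq_abs ξ]
        nlinarith [mul_nonneg hc.le (norm_nonneg (R ((ξ : ℂ) ^ 2 + lam)))]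
    _ ≤ 2 * (1 + N) * ‖R ((ξ : ℂ) ^ 2 + lam)‖ := by gcongr
    _ ≤ 2 * M := by linarith

theorem resolvent_sub_resolvent_along_parabola
    (hRes : ∀ z ∈ Sector φ, ∀ w ∈ Sector φ, R z - R w = (w - z) • ((R z).comp (R w)))
    {lam : ℂ} (hmem : ∀ ξ : ℝ, (ξ : ℂ) ^ 2 + lam ∈ Sector φ) (x y : ℝ) :
    R ((y : ℂ) ^ 2 + lam) - R ((x : ℂ) ^ 2 + lam) =
      (x ^ 2 - y ^ 2) • (R ((y : ℂ) ^ 2 + lam) * R ((x : ℂ) ^ 2 + lam)) := by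
  rw [hRes _ (hmem y) _ (hmem x), ← Complex.coe_smul]
  congr 1
  push_cast
  ring

end Resolvent

theorem resolvent_symbol_mikhlin_estimates_general
    (E : Type*) [NormedAddCommGroup E] [NormedSpace ℂ E]
    (φ M : ℝ) (hφ0 : 0 ≤ φ) (hφπ : φ < Real.pi)
    (R : ℂ → E →L[ℂ] E)
    (hRnorm : ∀ z ∈ Sector φ, ‖R z‖ ≤ M * (1 + ‖z‖)⁻¹)
    (hRes : ∀ z ∈ Sector φ, ∀ w ∈ Sector φ, R z - R w = (w - z) • ((R z).comp (R w))) :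
    ∃ C : ℝ, 0 ≤ C ∧
      ∀ lam ∈ Sector φ, (∀ ξ : ℝ, ((ξ : ℂ) ^ 2 + lam) ∈ Sector φ) →
        ContDiff ℝ 2 (fun ξ : ℝ => (ξ : ℂ) ^ 2 • R ((ξ : ℂ) ^ 2 + lam)) ∧
        ∀ k : ℕ, k ≤ 2 → ∀ ξ : ℝ,
          (1 + |ξ|) ^ k *
              ‖iteratedDeriv k (fun ξ : ℝ => (ξ : ℂ) ^ 2 • R ((ξ : ℂ) ^ 2 + lam)) ξ‖ ≤ C := by
  set L := 2 * M / Real.cos (φ / 2)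
  have hL : 0 ≤ L := div_nonneg (by linarith [nonneg_of_norm_resolvent_le hRnorm])
    (cos_half_pos hφ0 hφπ).le
  refine ⟨2 * L + 10 * L ^ 2 + 8 * L ^ 3, by positivity, fun lam hlam hmem => ?_⟩
  set f : ℝ → E →L[ℂ] E := fun ξ => R ((ξ : ℂ) ^ 2 + lam)
  have hfL : ∀ ξ, (1 + |ξ|) ^ 2 * ‖f ξ‖ ≤ L := fun ξ =>
    one_add_abs_sq_mul_norm_resolvent_le hφ0 hφπ hRnorm hlam (hmem ξ)
  have hfB : ∀ ξ, ‖f ξ‖ ≤ L := fun ξ =>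
    (le_mul_of_one_le_left (norm_nonneg _) (one_le_pow₀ (by simp))).trans (hfL ξ)
  have hf' : ∀ x, HasDerivAt f (-(2 * x) • f x ^ 2) x := fun x => by
    simpa [pow_two] using hasDerivAt_of_resolvent_identity (hasDerivAt_pow 2 x) hfB
      (resolvent_sub_resolvent_along_parabola hRes hmem x)
  have hσ : (fun ξ : ℝ => (ξ : ℂ) ^ 2 • R ((ξ : ℂ) ^ 2 + lam)) = fun ξ => ξ ^ 2 • f ξ := by
    funext ξ
    rw [← Complex.coe_smul]
    push_cast
    rfl
  rw [hσ]
  exact ⟨contDiff_two_sq_smul hf', fun k hk ξ =>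
    one_add_abs_pow_mul_norm_iteratedDeriv_sq_smul_le hf' hfL hk ξ⟩

/-- if `A` is `φ`-positive in `E` (encoded by its resolvent family `R`, with
`R z = (A + z)⁻¹`, `‖R z‖ ≤ M (1+|z|)⁻¹` on `S_φ` and the resolvent identity), then for
`λ ∈ S_φ` such that `ξ² + λ ∈ S_φ` for all real `ξ`, the function
`σ(ξ) = ξ² (A + ξ² + λ)⁻¹` is `C²` and satisfies `‖(1+|ξ|)^k σ^{(k)}(ξ)‖ ≤ C` for
`k = 0, 1, 2`, with `C` uniform in `λ`. -/
theorem resolvent_symbol_mikhlin_estimates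
    (E : Type*) [NormedAddCommGroup E] [NormedSpace ℂ E] [CompleteSpace E]
    (φ M : ℝ) (hφ0 : 0 ≤ φ) (hφπ : φ < Real.pi) (hM : 0 < M)
    (R : ℂ → E →L[ℂ] E)
    (hRnorm : ∀ z ∈ Sector φ, ‖R z‖ ≤ M * (1 + ‖z‖)⁻¹)
    (hRes : ∀ z ∈ Sector φ, ∀ w ∈ Sector φ, R z - R w = (w - z) • ((R z).comp (R w))) :
    ∃ C : ℝ, 0 ≤ C ∧
      ∀ lam ∈ Sector φ, (∀ ξ : ℝ, ((ξ : ℂ) ^ 2 + lam) ∈ Sector φ) →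
        ContDiff ℝ 2 (fun ξ : ℝ => (ξ : ℂ) ^ 2 • R ((ξ : ℂ) ^ 2 + lam)) ∧
        ∀ k : ℕ, k ≤ 2 → ∀ ξ : ℝ,
          (1 + |ξ|) ^ k *
              ‖iteratedDeriv k (fun ξ : ℝ => (ξ : ℂ) ^ 2 • R ((ξ : ℂ) ^ 2 + lam)) ξ‖ ≤ C :=
  resolvent_symbol_mikhlin_estimates_general E φ M hφ0 hφπ R hRnorm hRes
end
end
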